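/- For a càdlàg function f : [a,b] → ℝ and c > 0, the function s ↦ UTV^c(f,[a,s]) − DTV^c(f,[a,s]) is càdlàg, and every point of discontinuity of this function is a point of discontinuity of f. -/

import Mathlib

open Set Filter

/-- A finite partition `t 0 < t 1 < ... < t n` of points in `[a, b]`. -/
def IsPart (a b : ℝ) (n : ℕ) (t : ℕ → ℝ) : Prop :=
  a ≤ t 0 ∧ t n ≤ b ∧ ∀ i < n, t i < t (i + 1)

/-- Total variation of `f` on `[a, b]`. -/
noncomputable def TVar {E : Type*} [PseudoMetricSpace E] (f : ℝ → E) (a b : ℝ) : ENNReal :=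
  ⨆ (n : ℕ) (t : ℕ → ℝ) (_ : IsPart a b n t),
    ∑ i ∈ Finset.range n, ENNReal.ofReal (dist (f (t (i + 1))) (f (t i)))

/-- Truncated variation of `f` at level `c` on `[a, b]`. -/
noncomputable def TVc {E : Type*} [PseudoMetricSpace E] (f : ℝ → E) (c a b : ℝ) : ENNReal :=
  ⨆ (n : ℕ) (t : ℕ → ℝ) (_ : IsPart a b n t),
    ∑ i ∈ Finset.range n, ENNReal.ofReal (dist (f (t (i + 1))) (f (t i)) - c)

/-- Upward truncated variation. -/
noncomputable def UTVc (f : ℝ → ℝ) (c a b : ℝ) : ENNReal :=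
  ⨆ (n : ℕ) (t : ℕ → ℝ) (_ : IsPart a b n t),
    ∑ i ∈ Finset.range n, ENNReal.ofReal (f (t (i + 1)) - f (t i) - c)

/-- Downward truncated variation. -/
noncomputable def DTVc (f : ℝ → ℝ) (c a b : ℝ) : ENNReal :=
  ⨆ (n : ℕ) (t : ℕ → ℝ) (_ : IsPart a b n t),
    ∑ i ∈ Finset.range n, ENNReal.ofReal (f (t i) - f (t (i + 1)) - c)

/-- `f` is càdlàg on `[a, b]`: right-continuous on `[a, b)`, with left limits on `(a, b]`. -/
def Cadlag {E : Type*} [TopologicalSpace E] (f : ℝ → E) (a b : ℝ) : Prop :=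
  (∀ t ∈ Set.Ico a b, Tendsto f (nhdsWithin t (Set.Ioi t)) (nhds (f t))) ∧
  (∀ t ∈ Set.Ioc a b, ∃ l, Tendsto f (nhdsWithin t (Set.Iio t)) (nhds l))

/-!
Cutting a partition of `[a, t]` at `s` loses at most the rise of `f` on `[s, t]` above `f s`, and
a partition of an interval on which `f` stays within `c / 2` of a value contributes nothing, except
for a last increment ending at a jump. Hence `s ↦ UTV^c(f, [a, s])` moves little on any side of `t`
from which `f` is continuous at `t`; this gives right-continuity, continuity at continuity points of
`f`, and, by a supremum argument that also uses left limits, finiteness on `[a, b]`. Left limits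
then exist by monotonicity, and `DTV^c(f) = UTV^c(-f)`.
-/

open scoped ENNReal Topology

lemma exists_le_and_lt_succ {α : Type*} [LinearOrder α] {u : ℕ → α} {s : α} :
    ∀ {n : ℕ}, u 0 ≤ s → s < u n → ∃ k < n, u k ≤ s ∧ s < u (k + 1)
  | 0, h0, hn => absurd h0 hn.not_ge
  | n + 1, h0, hn => by
    rcases le_or_gt (u n) s with h | h
    · exact ⟨n, n.lt_succ_self, h, hn⟩
    · obtain ⟨k, hk, hks⟩ := exists_le_and_lt_succ h0 h
      exact ⟨k, hk.trans n.lt_succ_self, hks⟩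

namespace IsPart

variable {a b : ℝ} {n : ℕ} {t : ℕ → ℝ}

lemma strictMonoOn (h : IsPart a b n t) : StrictMonoOn t (Iic n) :=
  strictMonoOn_Iic_of_lt_succ fun m hm => by simpa only [Order.succ_eq_add_one] using h.2.2 m hm

lemma mem_Icc (h : IsPart a b n t) {i : ℕ} (hi : i ≤ n) : t i ∈ Icc a b :=
  ⟨h.1.trans (h.strictMonoOn.monotoneOn (mem_Iic.2 n.zero_le) (mem_Iic.2 hi) i.zero_le),
    (h.strictMonoOn.monotoneOn (mem_Iic.2 hi) (mem_Iic.2 le_rfl) hi).trans h.2.1⟩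

end IsPart

lemma eventually_abs_sub_le {α : Type*} {F : Filter α} {g : α → ℝ} {l r : ℝ}
    (hg : Tendsto g F (𝓝 l)) (hr : 0 < r) : ∀ᶠ u in F, |g u - l| ≤ r :=
  hg.eventually (Metric.closedBall_mem_nhds l hr)

lemma Filter.Eventually.forall_uIcc_nhdsWithin {S : Set ℝ} [S.OrdConnected] {t : ℝ} (ht : t ∈ S)
    {p : ℝ → Prop} (h : ∀ᶠ u in 𝓝[S] t, p u) : ∀ᶠ s in 𝓝[S] t, ∀ u ∈ uIcc t s, p u := by
  obtain ⟨ε, hε, hsub⟩ := Metric.mem_nhdsWithin_iff.1 h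
  filter_upwards [inter_mem_nhdsWithin S (Metric.ball_mem_nhds t hε)] with s ⟨hsS, hs⟩ u hu
  refine hsub ⟨?_, Set.OrdConnected.uIcc_subset ‹_› ht hsS hu⟩
  rw [Metric.mem_ball, dist_comm] at hs ⊢
  exact (Real.dist_left_le_of_mem_uIcc hu).trans_lt hs

lemma tendsto_toReal_of_forall_le_add {α : Type*} {l : Filter α} {g : α → ℝ≥0∞} {x : ℝ≥0∞}
    (hx : x ≠ ⊤) (h : ∀ η > 0, ∀ᶠ s in l, g s ≤ x + ENNReal.ofReal η ∧ x ≤ g s + ENNReal.ofReal η) :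
    Tendsto (fun s => (g s).toReal) l (𝓝 x.toReal) := by
  rw [Metric.tendsto_nhds]
  intro ε hε
  have hη : 0 ≤ ε / 2 := (half_pos hε).le
  filter_upwards [h (ε / 2) (half_pos hε)] with s ⟨hup, hlow⟩
  have hs : g s ≠ ⊤ := ne_top_of_le_ne_top (by finiteness) hup
  have h1 := ENNReal.toReal_mono (by finiteness) hup
  have h2 := ENNReal.toReal_mono (by finiteness) hlow
  rw [ENNReal.toReal_add hx ENNReal.ofReal_ne_top, ENNReal.toReal_ofReal hη] at h1
  rw [ENNReal.toReal_add hs ENNReal.ofReal_ne_top, ENNReal.toReal_ofReal hη] at h2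
  rw [Real.dist_eq, abs_lt]
  constructor <;> linarith

section UTVc

variable {f : ℝ → ℝ} {c a b s t : ℝ}

lemma sum_le_UTVc {n : ℕ} {u : ℕ → ℝ} (h : IsPart a b n u) :
    ∑ i ∈ Finset.range n, ENNReal.ofReal (f (u (i + 1)) - f (u i) - c) ≤ UTVc f c a b :=
  le_iSup_of_le n (le_iSup₂_of_le u h le_rfl)

lemma UTVc_mono (hst : s ≤ t) : UTVc f c a s ≤ UTVc f c a t :=
  iSup_le fun _ => iSup₂_le fun _ h => sum_le_UTVc ⟨h.1, h.2.1.trans hst, h.2.2⟩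

lemma DTVc_eq_UTVc_neg : DTVc f c a b = UTVc (-f) c a b := by
  simp only [DTVc, UTVc, Pi.neg_apply, neg_sub_neg]

lemma UTVc_le_ofReal {K : ℝ} (hK : 0 ≤ K)
    (hinc : ∀ u v, s ≤ u → u ≤ v → v < t → f v - f u ≤ c)
    (hend : ∀ u, s ≤ u → u < t → f t - f u - c ≤ K) : UTVc f c s t ≤ ENNReal.ofReal K := by
  refine iSup_le fun n => iSup₂_le fun u hu => ?_
  cases n with
  | zero => simp
  | succ m =>
    have hm : u m < u (m + 1) := hu.2.2 m m.lt_succ_self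
    have hsm : s ≤ u m := (hu.mem_Icc m.le_succ).1
    rw [Finset.sum_range_succ, Finset.sum_eq_zero fun i hi => ?_, zero_add]
    · rcases hu.2.1.lt_or_eq with hlt | rfl
      · exact ENNReal.ofReal_le_ofReal (by linarith [hinc _ _ hsm hm.le hlt])
      · exact ENNReal.ofReal_le_ofReal (hend _ hsm hm)
    · have hi : i < m := Finset.mem_range.1 hi
      have hlt : u (i + 1) < t := (hu.strictMonoOn.monotoneOn (mem_Iic.2 (by omega))
        (mem_Iic.2 m.le_succ) hi).trans_lt (hm.trans_le hu.2.1)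
      rw [ENNReal.ofReal_eq_zero, sub_nonpos]
      exact hinc _ _ (hu.mem_Icc (by omega)).1 (hu.2.2 i (by omega)).le hlt

lemma UTVc_eq_zero_of_le (h : t ≤ s) : UTVc f c s t = 0 :=
  nonpos_iff_eq_zero.1 <| by
    simpa using UTVc_le_ofReal (f := f) (c := c) le_rfl (fun _ _ _ _ _ => by linarith)
      (fun _ _ _ => by linarith)

lemma sum_add_ofReal_le_UTVc (hc : 0 ≤ c) {k : ℕ} {u : ℕ → ℝ} (hu : IsPart a s k u) :
    ∑ i ∈ Finset.range k, ENNReal.ofReal (f (u (i + 1)) - f (u i) - c) +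
      ENNReal.ofReal (f s - f (u k) - c) ≤ UTVc f c a s := by
  rcases hu.2.1.lt_or_eq with hlt | heq
  · let w : ℕ → ℝ := fun i => if i ≤ k then u i else s
    have hw : IsPart a s (k + 1) w := by
      refine ⟨by simpa [w] using hu.1, by simp [w], fun i hi => ?_⟩
      rcases (Nat.lt_succ_iff.1 hi).lt_or_eq with hik | rfl
      · simpa [w, hik.le, Nat.succ_le_of_lt hik] using hu.2.2 i hik
      · simpa [w] using hlt
    calc _ = ∑ i ∈ Finset.range (k + 1), ENNReal.ofReal (f (w (i + 1)) - f (w i) - c) := by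
          rw [Finset.sum_range_succ]
          congr 1
          · refine Finset.sum_congr rfl fun i hi => ?_
            have hi : i < k := Finset.mem_range.1 hi
            simp [w, hi.le, Nat.succ_le_of_lt hi]
          · simp [w]
      _ ≤ UTVc f c a s := sum_le_UTVc hw
  · rw [ENNReal.ofReal_eq_zero.2 (by rw [heq]; linarith), add_zero]
    exact sum_le_UTVc hu

/-- Cutting the interval `[s, t]` out of a partition of `[a, t]` only loses the part of the
increment across `s` above `f s`, which is at most `e`. -/
lemma UTVc_le_add (hc : 0 ≤ c) {e : ℝ} (hbd : ∀ u ∈ Icc s t, f u - f s ≤ e) :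
    UTVc f c a t ≤ UTVc f c a s + UTVc f c s t + ENNReal.ofReal e := by
  refine iSup_le fun n => iSup₂_le fun u hu => ?_
  rcases le_or_gt (u n) s with hn | hn
  · exact le_add_right (le_add_right (sum_le_UTVc ⟨hu.1, hn, hu.2.2⟩))
  rcases lt_or_ge s (u 0) with h0 | h0
  · exact le_add_right (le_add_left (sum_le_UTVc ⟨h0.le, hu.2.1, hu.2.2⟩))
  obtain ⟨k, hkn, hks, hsk⟩ := exists_le_and_lt_succ h0 hn
  obtain ⟨m, rfl⟩ : ∃ m, n = k + 1 + m := ⟨n - (k + 1), by omega⟩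
  set T : ℕ → ℝ≥0∞ := fun i => ENNReal.ofReal (f (u (i + 1)) - f (u i) - c)
  have hhead : ∑ i ∈ Finset.range k, T i + ENNReal.ofReal (f s - f (u k) - c) ≤ UTVc f c a s :=
    sum_add_ofReal_le_UTVc hc ⟨hu.1, hks, fun i hi => hu.2.2 i (by omega)⟩
  have hcross : T k ≤ ENNReal.ofReal (f s - f (u k) - c) + ENNReal.ofReal e := by
    have := hbd (u (k + 1)) ⟨hsk.le, (hu.mem_Icc (by omega)).2⟩
    exact (ENNReal.ofReal_le_ofReal (by linarith)).trans ENNReal.ofReal_add_le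
  have htail : ∑ j ∈ Finset.range m, T (k + 1 + j) ≤ UTVc f c s t :=
    sum_le_UTVc (u := fun j => u (k + 1 + j))
      ⟨hsk.le, hu.2.1, fun j hj => hu.2.2 (k + 1 + j) (by omega)⟩
  calc ∑ i ∈ Finset.range (k + 1 + m), T i
      = ∑ i ∈ Finset.range k, T i + T k + ∑ j ∈ Finset.range m, T (k + 1 + j) := by
        rw [Finset.sum_range_add, Finset.sum_range_succ]
    _ ≤ ∑ i ∈ Finset.range k, T i + (ENNReal.ofReal (f s - f (u k) - c) + ENNReal.ofReal e) +
        UTVc f c s t := by gcongr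
    _ = (∑ i ∈ Finset.range k, T i + ENNReal.ofReal (f s - f (u k) - c)) + UTVc f c s t +
        ENNReal.ofReal e := by ring
    _ ≤ UTVc f c a s + UTVc f c s t + ENNReal.ofReal e := by gcongr

lemma UTVc_le_add_of_abs_sub_le {x y z r : ℝ} (hr : 2 * r ≤ c)
    (h : ∀ u ∈ Ico x y, |f u - z| ≤ r) :
    UTVc f c a y ≤ UTVc f c a x + ENNReal.ofReal (2 * (r + |f y - z|)) := by
  rcases le_or_gt y x with hyx | hxy
  · exact (UTVc_mono hyx).trans le_self_add
  have hx := abs_le.1 (h x ⟨le_rfl, hxy⟩)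
  have hmid : UTVc f c x y ≤ ENNReal.ofReal |f y - z| := by
    refine UTVc_le_ofReal (abs_nonneg _) (fun u v hu huv hv => ?_) (fun u hu huy => ?_)
    · have := abs_le.1 (h u ⟨hu, huv.trans_lt hv⟩)
      have := abs_le.1 (h v ⟨hu.trans huv, hv⟩)
      linarith
    · have := abs_le.1 (h u ⟨hu, huy⟩)
      linarith [le_abs_self (f y - z)]
  have hsplit : UTVc f c a y ≤ UTVc f c a x + UTVc f c x y + ENNReal.ofReal (2 * r + |f y - z|) :=
    UTVc_le_add (by linarith) fun u hu => by
      rcases hu.2.lt_or_eq with huy | huy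
      · have := abs_le.1 (h u ⟨hu.1, huy⟩)
        linarith [abs_nonneg (f y - z)]
      · rw [huy]
        linarith [le_abs_self (f y - z)]
  calc UTVc f c a y
      ≤ UTVc f c a x + ENNReal.ofReal |f y - z| + ENNReal.ofReal (2 * r + |f y - z|) :=
        hsplit.trans (by gcongr)
    _ = UTVc f c a x + ENNReal.ofReal (2 * (r + |f y - z|)) := by
        rw [add_assoc, ← ENNReal.ofReal_add (abs_nonneg _) (by linarith [abs_nonneg (f y - z)])]
        ring_nf

lemma continuousWithinAt_toReal_UTVc (hc : 0 < c) {S : Set ℝ} [S.OrdConnected] (ht : t ∈ S)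
    (hfin : UTVc f c a t ≠ ⊤) (hf : ContinuousWithinAt f S t) :
    ContinuousWithinAt (fun s => (UTVc f c a s).toReal) S t := by
  refine tendsto_toReal_of_forall_le_add hfin fun η hη => ?_
  set r := min (η / 4) (c / 2)
  have hr : 0 < r := by positivity
  have hrη : r ≤ η / 4 := min_le_left _ _
  have hrc : 2 * r ≤ c := by linarith [min_le_right (η / 4) (c / 2)]
  filter_upwards [(eventually_abs_sub_le hf hr).forall_uIcc_nhdsWithin ht] with s hs
  rcases le_total t s with hts | hst
  · refine ⟨?_, (UTVc_mono hts).trans le_self_add⟩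
    calc UTVc f c a s ≤ UTVc f c a t + ENNReal.ofReal (2 * (r + |f s - f t|)) :=
          UTVc_le_add_of_abs_sub_le hrc fun u hu => hs u (Icc_subset_uIcc (Ico_subset_Icc_self hu))
      _ ≤ UTVc f c a t + ENNReal.ofReal η := by
          gcongr
          linarith [hs s right_mem_uIcc]
  · refine ⟨(UTVc_mono hst).trans le_self_add, ?_⟩
    calc UTVc f c a t ≤ UTVc f c a s + ENNReal.ofReal (2 * (r + |f t - f t|)) :=
          UTVc_le_add_of_abs_sub_le hrc fun u hu => hs u (Icc_subset_uIcc' (Ico_subset_Icc_self hu))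
      _ ≤ UTVc f c a s + ENNReal.ofReal η := by
          gcongr
          simp only [sub_self, abs_zero, add_zero]
          linarith

end UTVc

namespace Cadlag

section

variable {E : Type*} [TopologicalSpace E] {f g : ℝ → E} {a b : ℝ}

lemma neg [Neg E] [ContinuousNeg E] (hf : Cadlag f a b) : Cadlag (-f) a b :=
  ⟨fun t ht => (hf.1 t ht).neg, fun t ht =>
    let ⟨l, hl⟩ := hf.2 t ht
    ⟨-l, hl.neg⟩⟩

lemma sub [Sub E] [ContinuousSub E] (hf : Cadlag f a b) (hg : Cadlag g a b) :
    Cadlag (fun t => f t - g t) a b :=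
  ⟨fun t ht => (hf.1 t ht).sub (hg.1 t ht), fun t ht =>
    let ⟨l, hl⟩ := hf.2 t ht
    let ⟨l', hl'⟩ := hg.2 t ht
    ⟨l - l', hl.sub hl'⟩⟩

end

section

variable {f : ℝ → ℝ} {a b c : ℝ}

/-- The supremum `m` of the points `x ∈ [a, b]` with `UTV^c(f, [a, x]) < ∞` is reached thanks to
the left limit of `f` at `m`, and equals `b` thanks to the right-continuity of `f` at `m`. -/
theorem UTVc_ne_top (hf : Cadlag f a b) (hc : 0 < c) : UTVc f c a b ≠ ⊤ := by
  rcases lt_or_ge b a with hba | hab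
  · simp [UTVc_eq_zero_of_le hba.le]
  set S := {x ∈ Icc a b | UTVc f c a x ≠ ⊤}
  have haS : a ∈ S := ⟨left_mem_Icc.2 hab, by simp [UTVc_eq_zero_of_le le_rfl]⟩
  have hbdd : BddAbove S := ⟨b, fun x hx => hx.1.2⟩
  set m := sSup S
  have ham : a ≤ m := le_csSup hbdd haS
  have hmb : m ≤ b := csSup_le ⟨a, haS⟩ fun x hx => hx.1.2
  have hIco : Ico a m ⊆ S := fun x hx =>
    let ⟨y, hyS, hxy⟩ := exists_lt_of_lt_csSup ⟨a, haS⟩ hx.2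
    ⟨⟨hx.1, hxy.le.trans hyS.1.2⟩, ne_top_of_le_ne_top hyS.2 (UTVc_mono hxy.le)⟩
  have hm : UTVc f c a m ≠ ⊤ := by
    rcases ham.eq_or_lt with ham | ham
    · simp [← ham, UTVc_eq_zero_of_le le_rfl]
    obtain ⟨l, hl⟩ := hf.2 m ⟨ham, hmb⟩
    obtain ⟨x, hxm, hx⟩ := mem_nhdsLT_iff_exists_Ico_subset.1
      (eventually_abs_sub_le hl (half_pos hc))
    have hx' : max a x ∈ Ico a m := ⟨le_max_left _ _, max_lt ham hxm⟩
    refine ne_top_of_le_ne_top ?_ <| UTVc_le_add_of_abs_sub_le (a := a) (x := max a x)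
      (r := c / 2) (by linarith) fun u hu => hx ⟨(le_max_right _ _).trans hu.1, hu.2⟩
    exact ENNReal.add_ne_top.2 ⟨(hIco hx').2, ENNReal.ofReal_ne_top⟩
  rcases hmb.eq_or_lt with hmb | hmb
  · exact hmb ▸ hm
  obtain ⟨y, hym, hy⟩ := mem_nhdsGT_iff_exists_Ioc_subset.1
    (eventually_abs_sub_le (hf.1 m ⟨ham, hmb⟩) (half_pos hc))
  have hfin : UTVc f c a (min y b) ≠ ⊤ := by
    refine ne_top_of_le_ne_top ?_ <| UTVc_le_add_of_abs_sub_le (a := a) (x := m) (z := f m)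
      (r := c / 2) (by linarith) fun u hu => ?_
    · exact ENNReal.add_ne_top.2 ⟨hm, ENNReal.ofReal_ne_top⟩
    · rcases hu.1.eq_or_lt with rfl | hmu
      · simpa using (half_pos hc).le
      · exact hy ⟨hmu, hu.2.le.trans (min_le_left _ _)⟩
  have : min y b ≤ m := le_csSup hbdd ⟨⟨ham.trans (lt_min hym hmb).le, min_le_right _ _⟩, hfin⟩
  exact absurd this (lt_min hym hmb).not_ge

theorem toReal_UTVc (hf : Cadlag f a b) (hc : 0 < c) :
    Cadlag (fun s => (UTVc f c a s).toReal) a b := by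
  have hfin (s : ℝ) (hs : s ≤ b) : UTVc f c a s ≠ ⊤ :=
    ne_top_of_le_ne_top (hf.UTVc_ne_top hc) (UTVc_mono hs)
  refine ⟨fun t ht => ?_, fun t ht => ⟨_, MonotoneOn.tendsto_nhdsLT ?_ ?_⟩⟩
  · refine continuousWithinAt_Ioi_iff_Ici.2 ?_
    exact continuousWithinAt_toReal_UTVc hc self_mem_Ici (hfin t ht.2.le)
      (continuousWithinAt_Ioi_iff_Ici.1 (hf.1 t ht))
  · exact fun x _ y hy hxy => ENNReal.toReal_mono (hfin y (hy.out.le.trans ht.2)) (UTVc_mono hxy)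
  · exact ⟨(UTVc f c a b).toReal, forall_mem_image.2 fun x hx =>
      ENNReal.toReal_mono (hfin b le_rfl) (UTVc_mono (hx.out.le.trans ht.2))⟩

end

end Cadlag

theorem f0c_cadlag_general (a b : ℝ) (f : ℝ → ℝ)
    (hf : Cadlag f a b) (c : ℝ) (hc : 0 < c) :
    Cadlag (fun t => (UTVc f c a t).toReal - (DTVc f c a t).toReal) a b ∧
    ∀ t ∈ Set.Icc a b, ContinuousWithinAt f (Set.Icc a b) t →
      ContinuousWithinAt (fun t => (UTVc f c a t).toReal - (DTVc f c a t).toReal)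
        (Set.Icc a b) t := by
  simp only [DTVc_eq_UTVc_neg]
  refine ⟨(hf.toReal_UTVc hc).sub (hf.neg.toReal_UTVc hc), fun t ht hft => ?_⟩
  have hfin {g : ℝ → ℝ} (hg : Cadlag g a b) : UTVc g c a t ≠ ⊤ :=
    ne_top_of_le_ne_top (hg.UTVc_ne_top hc) (UTVc_mono ht.2)
  exact (continuousWithinAt_toReal_UTVc hc ht (hfin hf) hft).sub
    (continuousWithinAt_toReal_UTVc hc ht (hfin hf.neg) hft.neg)

/-- `s ↦ UTV^c(f,[a,s]) − DTV^c(f,[a,s])` is càdlàg on `[a, b]`, and each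
of its points of discontinuity is a point of discontinuity of `f`. -/
theorem f0c_cadlag (a b : ℝ) (hab : a < b) (f : ℝ → ℝ)
    (hf : Cadlag f a b) (c : ℝ) (hc : 0 < c) :
    Cadlag (fun t => (UTVc f c a t).toReal - (DTVc f c a t).toReal) a b ∧
    ∀ t ∈ Set.Icc a b, ContinuousWithinAt f (Set.Icc a b) t →
      ContinuousWithinAt (fun t => (UTVc f c a t).toReal - (DTVc f c a t).toReal)
        (Set.Icc a b) t :=
  f0c_cadlag_general a b f hf c hc
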